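/- The Laplace mechanism satisfies ε-differential privacy: if f : X → ℝ has sensitivity Δ = sup over adjacent x, x' of |f(x) - f(x')|, and M(x) = f(x) + Lap(Δ/ε) noise, then for all adjacent x, x' and all measurable S ⊆ ℝ, P[M(x) ∈ S] ≤ exp(ε) · P[M(x') ∈ S]. -/

import Mathlib

open MeasureTheory Real

/-- Laplace measure with scale `b` centered at `c`: density `(1/(2b)) exp(-|s-c|/b)`. -/
noncomputable def lapMeasure (b c : ℝ) : Measure ℝ :=
  volume.withDensity fun s => ENNReal.ofReal ((1 / (2 * b)) * Real.exp (-|s - c| / b))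

/- Moving the centre of a Laplace density by `δ` changes it pointwise by a factor at most
`exp (|δ| / b)`, by the triangle inequality in the exponent, so the same holds for the measures.
With `b = Δ / ε` and `|δ| ≤ Δ` for adjacent inputs, the factor is at most `exp ε`. -/

theorem laplace_density_le_exp_mul {b : ℝ} (hb : 0 < b) (c c' s : ℝ) :
    1 / (2 * b) * exp (-|s - c| / b) ≤
      exp (|c - c'| / b) * (1 / (2 * b) * exp (-|s - c'| / b)) := by
  have hexp : -|s - c| / b ≤ |c - c'| / b + -|s - c'| / b := by
    rw [← add_div]
    gcongr
    linarith [abs_sub_le s c c', abs_sub_comm c c']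
  calc 1 / (2 * b) * exp (-|s - c| / b)
      ≤ 1 / (2 * b) * exp (|c - c'| / b + -|s - c'| / b) := by gcongr
    _ = exp (|c - c'| / b) * (1 / (2 * b) * exp (-|s - c'| / b)) := by rw [exp_add]; ring

theorem lapMeasure_le_exp_smul {b : ℝ} (hb : 0 < b) (c c' : ℝ) :
    lapMeasure b c ≤ ENNReal.ofReal (exp (|c - c'| / b)) • lapMeasure b c' := by
  rw [lapMeasure, lapMeasure, ← withDensity_smul' _ _ ENNReal.ofReal_ne_top]
  refine withDensity_mono (ae_of_all _ fun s => ?_)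
  rw [Pi.smul_apply, smul_eq_mul, ← ENNReal.ofReal_mul (exp_pos _).le]
  exact ENNReal.ofReal_le_ofReal (laplace_density_le_exp_mul hb c c' s)

theorem laplace_mechanism_dp_general {X : Type*} (adj : X → X → Prop)
    (f : X → ℝ) (Δ ε : ℝ) (hΔ : 0 < Δ) (hε : 0 < ε)
    (hsens : IsLUB {d : ℝ | ∃ x x', adj x x' ∧ d = |f x - f x'|} Δ)
    (M : X → Measure ℝ) (hM : ∀ x, M x = lapMeasure (Δ / ε) (f x)) :
    ∀ x x', adj x x' → ∀ S : Set ℝ, MeasurableSet S →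
      M x S ≤ ENNReal.ofReal (Real.exp ε) * M x' S := by
  intro x x' hadj S _
  have hb : 0 < Δ / ε := div_pos hΔ hε
  have hratio : |f x - f x'| / (Δ / ε) ≤ ε := by
    rw [div_le_iff₀ hb, mul_div_cancel₀ _ hε.ne']
    exact hsens.1 ⟨x, x', hadj, rfl⟩
  rw [hM x, hM x']
  calc lapMeasure (Δ / ε) (f x) S
      ≤ ENNReal.ofReal (exp (|f x - f x'| / (Δ / ε))) * lapMeasure (Δ / ε) (f x') S :=
        lapMeasure_le_exp_smul hb (f x) (f x') S
    _ ≤ ENNReal.ofReal (exp ε) * lapMeasure (Δ / ε) (f x') S := by gcongr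

/-- The Laplace mechanism satisfies ε-differential privacy. -/
theorem laplace_mechanism_dp {X : Type*} (adj : X → X → Prop) (hsym : Symmetric adj)
    (f : X → ℝ) (Δ ε : ℝ) (hΔ : 0 < Δ) (hε : 0 < ε)
    (hsens : IsLUB {d : ℝ | ∃ x x', adj x x' ∧ d = |f x - f x'|} Δ)
    (M : X → Measure ℝ) (hM : ∀ x, M x = lapMeasure (Δ / ε) (f x)) :
    ∀ x x', adj x x' → ∀ S : Set ℝ, MeasurableSet S →
      M x S ≤ ENNReal.ofReal (Real.exp ε) * M x' S :=
  laplace_mechanism_dp_general adj f Δ ε hΔ hε hsens M hM
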